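/- Let G be a finitely generated group with word metric, ω a non-principal ultrafilter on ℕ, (d_j) scaling constants with lim_ω d_j = ∞, ε > 0, and suppose the ball B_C(ε, 1̄) in the asymptotic cone C = Con^ω(G,(d_j)) is covered by balls B_C(ε/4, x_i), i = 1,...,k, with x_i = (g_{i,j})^ω. Let p_j be natural numbers with lim_ω (2p_j)/d_j = ε and 2p_j > ε d_j. Then ω-almost surely in j, the ball B_G(2p_j, 1) in G is covered by the union of the balls g_{i,j} B_G(p_j, 1), i = 1,...,k. -/

import Mathlib

open scoped ENNReal

/-- Word-metric distance on a group `G` with respect to a generating set `S`: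
`dist g h` is the length of a shortest word over `S ∪ S⁻¹` representing `g⁻¹h`. -/
noncomputable def wordDist {G : Type*} [Group G] (S : Set G) (g h : G) : ℕ :=
  sInf {n | ∃ w : List G, (∀ x ∈ w, x ∈ S ∪ S⁻¹) ∧ w.prod = g⁻¹ * h ∧ w.length = n}

/-- The ultralimit of a sequence in `[0,∞]` along an ultrafilter `ω`:
the (unique) limit of the sequence along `ω` in the compact space `ℝ≥0∞`. -/
noncomputable def ulim (ω : Ultrafilter ℕ) (r : ℕ → ℝ≥0∞) : ℝ≥0∞ :=
  Filter.limUnder (ω : Filter ℕ) r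

/-- The rescaled ultralimit pseudodistance `d̄(u,v) = lim_ω dist(u_i,v_i)/d_i`
on sequences in `G`. -/
noncomputable def conPdist {G : Type*} [Group G] (ω : Ultrafilter ℕ) (d : ℕ → ℝ)
    (S : Set G) (u v : ℕ → G) : ℝ≥0∞ :=
  ulim ω fun i => (wordDist S (u i) (v i) : ℝ≥0∞) / ENNReal.ofReal (d i)

/-- The sequences at finite rescaled distance from the constant sequence `1`. -/
def GbSet {G : Type*} [Group G] (ω : Ultrafilter ℕ) (d : ℕ → ℝ) (S : Set G) :
    Set (ℕ → G) := {u | conPdist ω d S (fun _ => 1) u ≠ ∞}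

/-- The asymptotic cone `Con^ω(G,(d_i))`: the quotient of `GbSet` by the
relation `d̄(u,v) = 0`. -/
def Cone {G : Type*} [Group G] (ω : Ultrafilter ℕ) (d : ℕ → ℝ) (S : Set G) :=
  Quot (fun u v : GbSet ω d S => conPdist ω d S u.1 v.1 = 0)

/-- The metric on the asymptotic cone induced by `conPdist`. -/
noncomputable def coneDist {G : Type*} [Group G] (ω : Ultrafilter ℕ) (d : ℕ → ℝ)
    (S : Set G) (x y : Cone ω d S) : ℝ≥0∞ :=
  conPdist ω d S (Quot.out x).1 (Quot.out y).1

open scoped Pointwise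

/-!
If the covering failed on an ω-large set of indices, pick there a point `z_j` of `B_G(2p_j, 1)`
outside every `g_{i,j} B_G(p_j, 1)`. The sequence `(z_j)` is a point of the cone within `ε` of `1̄`,
yet at distance at least `lim_ω p_j / d_j = ε / 2` from every `x_i`, so no ball `B_C(ε/4, x_i)`
contains it.
-/

open Filter Topology

section Ultralimit

variable (ω : Ultrafilter ℕ)

lemma tendsto_ulim (r : ℕ → ℝ≥0∞) : Tendsto r (ω : Filter ℕ) (𝓝 (ulim ω r)) := by
  have h : Tendsto r (ω : Filter ℕ) (𝓝 (Ultrafilter.map r ω).lim) :=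
    (Ultrafilter.map r ω).le_nhds_lim
  rwa [ulim, h.limUnder_eq]

lemma ulim_eq_of_tendsto {r : ℕ → ℝ≥0∞} {a : ℝ≥0∞} (h : Tendsto r (ω : Filter ℕ) (𝓝 a)) :
    ulim ω r = a :=
  h.limUnder_eq

variable {ω}

lemma ulim_mono {r s : ℕ → ℝ≥0∞} (h : ∀ᶠ j in (ω : Filter ℕ), r j ≤ s j) :
    ulim ω r ≤ ulim ω s :=
  le_of_tendsto_of_tendsto (tendsto_ulim ω r) (tendsto_ulim ω s) h

lemma ulim_const_mul {c : ℝ≥0∞} (hc : c ≠ ∞) (r : ℕ → ℝ≥0∞) :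
    ulim ω (fun j => c * r j) = c * ulim ω r :=
  ulim_eq_of_tendsto ω (ENNReal.Tendsto.const_mul (tendsto_ulim ω r) (Or.inr hc))

end Ultralimit

section ConeDistance

variable {G : Type*} [Group G] {ω : Ultrafilter ℕ} {d : ℕ → ℝ} {S : Set G} {u v : ℕ → G}
  {q : ℕ → ℕ}

lemma conPdist_le_ulim (h : ∀ᶠ j in (ω : Filter ℕ), wordDist S (u j) (v j) ≤ q j) :
    conPdist ω d S u v ≤ ulim ω (fun j => (q j : ℝ≥0∞) / ENNReal.ofReal (d j)) :=
  ulim_mono <| h.mono fun _ hj => ENNReal.div_le_div_right (by exact_mod_cast hj) _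

lemma ulim_le_conPdist (h : ∀ᶠ j in (ω : Filter ℕ), q j ≤ wordDist S (u j) (v j)) :
    ulim ω (fun j => (q j : ℝ≥0∞) / ENNReal.ofReal (d j)) ≤ conPdist ω d S u v :=
  ulim_mono <| h.mono fun _ hj => ENNReal.div_le_div_right (by exact_mod_cast hj) _

end ConeDistance

lemma ulim_half_eq {ω : Ultrafilter ℕ} {d : ℕ → ℝ} {p : ℕ → ℕ} {ε : ℝ}
    (hplim : ulim ω (fun j => ((2 * p j : ℕ) : ℝ≥0∞) / ENNReal.ofReal (d j)) =
      ENNReal.ofReal ε) :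
    ulim ω (fun j => (p j : ℝ≥0∞) / ENNReal.ofReal (d j)) = ENNReal.ofReal (ε / 2) := by
  have hhalf : ∀ j, (p j : ℝ≥0∞) / ENNReal.ofReal (d j) =
      2⁻¹ * (((2 * p j : ℕ) : ℝ≥0∞) / ENNReal.ofReal (d j)) := by
    intro j
    rw [← mul_div_assoc, Nat.cast_mul, Nat.cast_two, ← mul_assoc,
      ENNReal.inv_mul_cancel two_ne_zero ENNReal.ofNat_ne_top, one_mul]
  simp_rw [hhalf, ulim_const_mul (ENNReal.inv_ne_top.2 two_ne_zero), hplim]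
  rw [ENNReal.ofReal_div_of_pos two_pos, ENNReal.ofReal_ofNat, ENNReal.div_eq_inv_mul]

theorem stmt11_general {G : Type*} [Group G] (S : Finset G)
    (ω : Ultrafilter ℕ)
    (d : ℕ → ℝ)
    (ε : ℝ) (hε : 0 < ε) (k : ℕ) (g : Fin k → ℕ → G)
    (hcov : ∀ u : ℕ → G, u ∈ GbSet ω d (S : Set G) →
        conPdist ω d (S : Set G) (fun _ => 1) u ≤ ENNReal.ofReal ε →
        ∃ i, conPdist ω d (S : Set G) (g i) u ≤ ENNReal.ofReal (ε / 4))
    (p : ℕ → ℕ)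
    (hplim : ulim ω (fun j => ((2 * p j : ℕ) : ℝ≥0∞) / ENNReal.ofReal (d j)) =
        ENNReal.ofReal ε) :
    {j | ∀ z : G, wordDist (S : Set G) 1 z ≤ 2 * p j →
        ∃ i, wordDist (S : Set G) (g i j) z ≤ p j} ∈ ω := by
  by_contra hnot
  have hbad : ∀ᶠ j in (ω : Filter ℕ), ∃ z : G, wordDist (S : Set G) 1 z ≤ 2 * p j ∧
      ∀ i, p j ≤ wordDist (S : Set G) (g i j) z := by
    filter_upwards [ω.compl_mem_iff_notMem.2 hnot] with j hj
    simp only [Set.mem_compl_iff, Set.mem_ofPred_eq, not_forall, not_exists, not_le] at hj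
    obtain ⟨z, hz, hfar⟩ := hj
    exact ⟨z, hz, fun i => (hfar i).le⟩
  obtain ⟨u, hu⟩ := hbad.choice
  have hnear : conPdist ω d (S : Set G) (fun _ => 1) u ≤ ENNReal.ofReal ε :=
    hplim ▸ conPdist_le_ulim (hu.mono fun _ hj => hj.1)
  obtain ⟨i, hi⟩ := hcov u (ne_top_of_le_ne_top ENNReal.ofReal_ne_top hnear) hnear
  have hfar : ENNReal.ofReal (ε / 2) ≤ conPdist ω d (S : Set G) (g i) u :=
    ulim_half_eq hplim ▸ ulim_le_conPdist (hu.mono fun _ hj => hj.2 i)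
  have hhalf_le_quarter : ε / 2 ≤ ε / 4 :=
    (ENNReal.ofReal_le_ofReal_iff (by positivity)).1 (hfar.trans hi)
  linarith

/-- Suppose the closed ball `B_C(ε, 1̄)` of the asymptotic cone
`C = Con^ω(G,(d_j))` is covered by the balls `B_C(ε/4, x_i)`, `i = 1,…,k`,
with `x_i = (g_{i,j})^ω`, and let `p_j ∈ ℕ` satisfy `2p_j > ε d_j` and
`lim_ω 2p_j/d_j = ε`.  Then ω-almost surely in `j`, the ball `B_G(2p_j,1)`
of `G` is covered by the translates `g_{i,j} B_G(p_j,1)`, `i = 1,…,k`. -/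
theorem stmt11 {G : Type*} [Group G] (S : Finset G)
    (hgen : Subgroup.closure (S : Set G) = ⊤) (hsym : ∀ x ∈ S, x⁻¹ ∈ S)
    (ω : Ultrafilter ℕ) (hω : ∀ A : Set ℕ, A.Finite → A ∉ ω)
    (d : ℕ → ℝ) (hd : ∀ n, 0 < d n)
    (hdlim : Filter.Tendsto d (ω : Filter ℕ) Filter.atTop)
    (ε : ℝ) (hε : 0 < ε) (k : ℕ) (g : Fin k → ℕ → G)
    (hg : ∀ i, g i ∈ GbSet ω d (S : Set G))
    (hcov : ∀ u : ℕ → G, u ∈ GbSet ω d (S : Set G) →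
        conPdist ω d (S : Set G) (fun _ => 1) u ≤ ENNReal.ofReal ε →
        ∃ i, conPdist ω d (S : Set G) (g i) u ≤ ENNReal.ofReal (ε / 4))
    (p : ℕ → ℕ) (hp : ∀ j, ε * d j < 2 * p j)
    (hplim : ulim ω (fun j => ((2 * p j : ℕ) : ℝ≥0∞) / ENNReal.ofReal (d j)) =
        ENNReal.ofReal ε) :
    {j | ∀ z : G, wordDist (S : Set G) 1 z ≤ 2 * p j →
        ∃ i, wordDist (S : Set G) (g i j) z ≤ p j} ∈ ω :=
  stmt11_general S ω d ε hε k g hcov p hplim
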